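/- arXiv:2005.02279 — 2 statements merged into one kernel-verified Lean document; each statement's English description precedes it below -/
import Mathlib

section
/- Let G and H be finite simple graphs, each with exactly q ≥ 1 edges, such that every vertex of H is incident with at least one edge. Let f : V(G) → ℕ and g : V(H) → ℕ be injective vertex labelings with induced edge label sets {|f(u) − f(v)| : uv ∈ E(G)} = {1, 2, …, q} and {|g(x) − g(y)| : xy ∈ E(H)} = {1, 2, …, q}, and suppose f(V(G)) = g(V(H)) as sets. If φ : V(G) → V(H) is a graph homomorphism satisfying |f(u) − f(v)| = |g(φ(u)) − g(φ(v))| for every edge uv ∈ E(G), then φ is bijective and uv ∈ E(G) ⟺ φ(u)φ(v) ∈ E(H); in particular G and H are isomorphic. -/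
/-!
Graceful labels of distinct edges are distinct, so a homomorphism preserving edge labels is
injective on edges; since `G` and `H` have equally many edges it is a bijection of edge sets.
Every vertex of `H` lies on an edge, hence is hit by `φ`, and `|V(G)| = |V(H)|` because the two
injective labelings have the same range, so `φ` is bijective. Finally every edge of `H` is the
image of an edge of `G`, which by injectivity of `φ` gives the reverse implication on adjacency.
-/

open Function Finset SimpleGraph

namespace SimpleGraph

variable {V W : Type*} {G : SimpleGraph V} {H : SimpleGraph W}

def edgeLabel (f : V → ℕ) : Sym2 V → ℤ :=
  Sym2.lift ⟨fun u v => |(f u : ℤ) - f v|, fun _ _ => abs_sub_comm _ _⟩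

theorem image_edgeSet_edgeLabel (f : V → ℕ) :
    edgeLabel f '' G.edgeSet = {n : ℤ | ∃ u v, G.Adj u v ∧ n = |(f u : ℤ) - f v|} := by
  ext n
  constructor
  · rintro ⟨e, he, rfl⟩
    induction e using Sym2.ind with
    | _ u v => exact ⟨u, v, he, rfl⟩
  · rintro ⟨u, v, huv, rfl⟩
    exact ⟨s(u, v), huv, rfl⟩

theorem injOn_edgeLabel_of_image_eq_Icc [Fintype G.edgeSet] {f : V → ℕ} {q : ℕ}
    (hcard : #G.edgeFinset = q) (himage : edgeLabel f '' G.edgeSet = Set.Icc 1 (q : ℤ)) :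
    Set.InjOn (edgeLabel f) G.edgeSet := by
  refine Set.injOn_of_ncard_image_eq ?_
  rw [himage, ← coe_edgeFinset, Set.ncard_coe_finset, hcard, ← Finset.coe_Icc,
    Set.ncard_coe_finset, Int.card_Icc]
  omega

namespace Hom

variable (φ : G →g H)

theorem mapEdgeSet_injective_of_injOn {α : Type*} {l : Sym2 V → α} {m : Sym2 W → α}
    (hl : Set.InjOn l G.edgeSet) (hlm : ∀ u v, G.Adj u v → m s(φ u, φ v) = l s(u, v)) :
    Injective φ.mapEdgeSet := by
  have hmap : ∀ e ∈ G.edgeSet, m (e.map φ) = l e := by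
    intro e he
    induction e using Sym2.ind with
    | _ u v => exact hlm u v he
  rintro ⟨e₁, h₁⟩ ⟨e₂, h₂⟩ h
  simp only [mapEdgeSet, Subtype.mk.injEq] at h
  exact Subtype.ext <| hl h₁ h₂ <| by rw [← hmap e₁ h₁, ← hmap e₂ h₂, h]

theorem exists_adj_of_surjective_mapEdgeSet (hφ : Surjective φ.mapEdgeSet) {x y : W}
    (hxy : H.Adj x y) : ∃ u v, G.Adj u v ∧ φ u = x ∧ φ v = y := by
  obtain ⟨⟨e, he⟩, hmap⟩ := hφ ⟨s(x, y), hxy⟩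
  induction e using Sym2.ind with
  | _ u v =>
    have hedge : s(φ u, φ v) = s(x, y) := congrArg Subtype.val hmap
    rcases Sym2.eq_iff.1 hedge with ⟨hu, hv⟩ | ⟨hv, hu⟩
    · exact ⟨u, v, he, hu, hv⟩
    · exact ⟨v, u, he.symm, hu, hv⟩

theorem surjective_of_surjective_mapEdgeSet (hφ : Surjective φ.mapEdgeSet)
    (hH : ∀ w, ∃ w', H.Adj w w') : Surjective φ := fun w =>
  have ⟨_, hw⟩ := hH w
  have ⟨u, _, _, hu, _⟩ := φ.exists_adj_of_surjective_mapEdgeSet hφ hw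
  ⟨u, hu⟩

theorem adj_of_surjective_mapEdgeSet (hinj : Injective φ) (hφ : Surjective φ.mapEdgeSet)
    {u v : V} (huv : H.Adj (φ u) (φ v)) : G.Adj u v := by
  obtain ⟨a, b, hab, ha, hb⟩ := φ.exists_adj_of_surjective_mapEdgeSet hφ huv
  rwa [← hinj ha, ← hinj hb]

end Hom

end SimpleGraph

theorem gracefully_graph_homomorphism_is_isomorphism_general {V W : Type*}
    [Fintype V] [Fintype W]
    (G : SimpleGraph V) (H : SimpleGraph W)
    [DecidableRel G.Adj] [DecidableRel H.Adj]
    (q : ℕ)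
    (hGq : G.edgeFinset.card = q) (hHq : H.edgeFinset.card = q)
    (hHnoiso : ∀ w : W, ∃ w' : W, H.Adj w w')
    (f : V → ℕ) (g : W → ℕ)
    (hf : Function.Injective f) (hg : Function.Injective g)
    (hEf : {n : ℤ | ∃ u v : V, G.Adj u v ∧ n = |(f u : ℤ) - (f v : ℤ)|}
            = Set.Icc (1 : ℤ) q)
    (hV : Set.range f = Set.range g)
    (φ : V → W)
    (hhom : ∀ u v : V, G.Adj u v → H.Adj (φ u) (φ v))
    (hlabel : ∀ u v : V, G.Adj u v →
      |(f u : ℤ) - (f v : ℤ)| = |(g (φ u) : ℤ) - (g (φ v) : ℤ)|) :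
    Function.Bijective φ ∧
    (∀ u v : V, G.Adj u v ↔ H.Adj (φ u) (φ v)) ∧
    Nonempty (G ≃g H) := by
  let ψ : G →g H := ⟨φ, hhom _ _⟩
  have hlabels : Set.InjOn (edgeLabel f) G.edgeSet :=
    injOn_edgeLabel_of_image_eq_Icc hGq (by rw [image_edgeSet_edgeLabel, hEf])
  have hψinj : Injective ψ.mapEdgeSet :=
    ψ.mapEdgeSet_injective_of_injOn (m := edgeLabel g) hlabels fun u v huv => (hlabel u v huv).symm
  have hψbij : Bijective ψ.mapEdgeSet := (Fintype.bijective_iff_injective_and_card _).2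
    ⟨hψinj, by rw [← edgeFinset_card, ← edgeFinset_card, hGq, hHq]⟩
  have hcard : Fintype.card V = Fintype.card W := by
    rw [← Set.card_range_of_injective hf, ← Set.card_range_of_injective hg]
    exact Fintype.card_congr (Equiv.setCongr hV)
  have hbij : Bijective φ := (Fintype.bijective_iff_surjective_and_card φ).2
    ⟨ψ.surjective_of_surjective_mapEdgeSet hψbij.2 hHnoiso, hcard⟩
  have hiff : ∀ u v, G.Adj u v ↔ H.Adj (φ u) (φ v) := fun u v =>
    ⟨hhom u v, ψ.adj_of_surjective_mapEdgeSet hbij.1 hψbij.2⟩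
  exact ⟨hbij, hiff, ⟨⟨Equiv.ofBijective φ hbij, (hiff _ _).symm⟩⟩⟩

/-- A gracefully graph homomorphism with equal vertex label sets and equal (graceful) edge
label sets `{1,…,q}` is bijective and an isomorphism. -/
theorem gracefully_graph_homomorphism_is_isomorphism {V W : Type*}
    [Fintype V] [Fintype W]
    (G : SimpleGraph V) (H : SimpleGraph W)
    [DecidableRel G.Adj] [DecidableRel H.Adj]
    (q : ℕ) (hq : 1 ≤ q)
    (hGq : G.edgeFinset.card = q) (hHq : H.edgeFinset.card = q)
    (hHnoiso : ∀ w : W, ∃ w' : W, H.Adj w w')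
    (f : V → ℕ) (g : W → ℕ)
    (hf : Function.Injective f) (hg : Function.Injective g)
    (hEf : {n : ℤ | ∃ u v : V, G.Adj u v ∧ n = |(f u : ℤ) - (f v : ℤ)|}
            = Set.Icc (1 : ℤ) q)
    (hEg : {n : ℤ | ∃ x y : W, H.Adj x y ∧ n = |(g x : ℤ) - (g y : ℤ)|}
            = Set.Icc (1 : ℤ) q)
    (hV : Set.range f = Set.range g)
    (φ : V → W)
    (hhom : ∀ u v : V, G.Adj u v → H.Adj (φ u) (φ v))
    (hlabel : ∀ u v : V, G.Adj u v →
      |(f u : ℤ) - (f v : ℤ)| = |(g (φ u) : ℤ) - (g (φ v) : ℤ)|) :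
    Function.Bijective φ ∧
    (∀ u v : V, G.Adj u v ↔ H.Adj (φ u) (φ v)) ∧
    Nonempty (G ≃g H) :=
  gracefully_graph_homomorphism_is_isomorphism_general G H q hGq hHq hHnoiso f g hf hg hEf hV φ hhom
    hlabel
end

section
/- Let G be a finite connected bipartite simple graph with q ≥ 1 edges and bipartition V(G) = X ∪ Y (every edge has one end in X and one end in Y). Then G admits a set-ordered graceful labeling if and only if G admits a set-ordered odd-graceful labeling. -/
/-- `f` is a set-ordered graceful labeling of a bipartite graph `G` with `q` edges and
parts `X, Y`: `f` is injective into `{1,…,q+1}`, the induced edge labels form exactly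
`{1,…,q}`, and every label on `X` is smaller than every label on `Y`. -/
def IsSetOrderedGracefulLabeling {V : Type*} (G : SimpleGraph V) (X Y : Set V)
    (q : ℕ) (f : V → ℕ) : Prop :=
  Function.Injective f ∧
  (∀ v : V, f v ∈ Set.Icc 1 (q + 1)) ∧
  ({n : ℤ | ∃ u v : V, G.Adj u v ∧ n = |(f u : ℤ) - (f v : ℤ)|}
    = Set.Icc (1 : ℤ) q) ∧
  (∀ x ∈ X, ∀ y ∈ Y, f x < f y)

/-- `g` is a set-ordered odd-graceful labeling of a bipartite graph `G` with `q` edges and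
parts `X, Y`: `g` is injective into `{1,…,2q+1}`, the induced edge labels form exactly
`{1,3,…,2q−1}`, and every label on `X` is smaller than every label on `Y`. -/
def IsSetOrderedOddGracefulLabeling {V : Type*} (G : SimpleGraph V) (X Y : Set V)
    (q : ℕ) (g : V → ℕ) : Prop :=
  Function.Injective g ∧
  (∀ v : V, g v ∈ Set.Icc 1 (2 * q + 1)) ∧
  ({n : ℤ | ∃ u v : V, G.Adj u v ∧ n = |(g u : ℤ) - (g v : ℤ)|}
    = {n : ℤ | ∃ k : ℕ, k < q ∧ n = 2 * (k : ℤ) + 1}) ∧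
  (∀ x ∈ X, ∀ y ∈ Y, g x < g y)


/-!
Doubling turns a set-ordered graceful labeling `f` into a set-ordered odd-graceful one: put
`2 f(x) - 1` on `X` and `2 f(y) - 2` on `Y`, so that every edge label `d` becomes `2 d - 1`.
Conversely, halving an odd-graceful labeling `g` (rounding `g(x)` up on `X`, and `g(y)` down
and then adding one on `Y`) turns every edge label `2 d - 1` back into `d`. Halving is injective
on each side because, `G` being connected and every edge label odd, all labels on one side have
the same parity.
-/

open Set

section

variable {V : Type*} {G : SimpleGraph V} {X Y : Set V} {q : ℕ} {f g : V → ℕ}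

theorem SimpleGraph.Preconnected.eq_of_forall_adj {β : Sort*} {h : V → β}
    (hG : G.Preconnected) (hadj : ∀ u v, G.Adj u v → h u = h v) (a b : V) : h a = h b := by
  obtain ⟨p⟩ := hG a b
  induction p with
  | nil => rfl
  | cons hab _ ih => exact (hadj _ _ hab).trans ih

def edgeLabels (G : SimpleGraph V) (f : V → ℕ) : Set ℤ :=
  {n | ∃ u v, G.Adj u v ∧ n = |(f u : ℤ) - f v|}

theorem edgeLabels_eq_image {φ : ℤ → ℤ}
    (h : ∀ u v, G.Adj u v → |(g u : ℤ) - g v| = φ |(f u : ℤ) - f v|) :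
    edgeLabels G g = φ '' edgeLabels G f := by
  ext n
  constructor
  · rintro ⟨u, v, huv, rfl⟩
    exact ⟨_, ⟨u, v, huv, rfl⟩, (h u v huv).symm⟩
  · rintro ⟨_, ⟨u, v, huv, rfl⟩, rfl⟩
    exact ⟨u, v, huv, (h u v huv).symm⟩

theorem setOf_odd_lt_eq_image_Icc (q : ℕ) :
    {n : ℤ | ∃ k : ℕ, k < q ∧ n = 2 * (k : ℤ) + 1} = (fun n : ℤ ↦ 2 * n - 1) '' Icc 1 (q : ℤ) := by
  ext n
  constructor
  · rintro ⟨k, hk, rfl⟩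
    exact ⟨k + 1, ⟨by omega, by omega⟩, by ring⟩
  · rintro ⟨m, ⟨hm1, hmq⟩, rfl⟩
    exact ⟨(m - 1).toNat, by omega, by simp only; omega⟩

theorem edgeLabels_eq_Icc_iff_of_abs_sub_eq
    (h : ∀ u v, G.Adj u v → |(g u : ℤ) - g v| = 2 * |(f u : ℤ) - f v| - 1) :
    edgeLabels G f = Icc 1 (q : ℤ) ↔
      edgeLabels G g = {n : ℤ | ∃ k : ℕ, k < q ∧ n = 2 * (k : ℤ) + 1} := by
  have hφ : Function.Injective (fun n : ℤ ↦ 2 * n - 1) := fun a b hab ↦ by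
    simp only at hab
    omega
  rw [edgeLabels_eq_image (φ := fun n ↦ 2 * n - 1) h, setOf_odd_lt_eq_image_Icc]
  exact hφ.image_injective.eq_iff.symm

namespace SimpleGraph.IsBipartiteWith

variable (hG : G.IsBipartiteWith X Y) (hf : ∀ x ∈ X, ∀ y ∈ Y, f x < f y)
  (hg : ∀ x ∈ X, ∀ y ∈ Y, g x < g y)
  (hfg : ∀ x ∈ X, ∀ y ∈ Y, G.Adj x y → (g y : ℤ) - g x = 2 * ((f y : ℤ) - f x) - 1)
include hG hf hg hfg

theorem abs_sub_eq_of_adj {u v : V} (huv : G.Adj u v) :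
    |(g u : ℤ) - g v| = 2 * |(f u : ℤ) - f v| - 1 := by
  rcases hG.mem_of_adj huv with ⟨hu, hv⟩ | ⟨hu, hv⟩
  · have := hfg u hu v hv huv
    rw [abs_of_neg (by linarith [hg u hu v hv] : (g u : ℤ) - g v < 0),
      abs_of_neg (by linarith [hf u hu v hv] : (f u : ℤ) - f v < 0)]
    omega
  · have := hfg v hv u hu huv.symm
    rw [abs_of_pos (by linarith [hg v hv u hu] : (0 : ℤ) < g u - g v),
      abs_of_pos (by linarith [hf v hv u hu] : (0 : ℤ) < f u - f v)]
    omega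

theorem edgeLabels_eq_Icc_iff :
    edgeLabels G f = Icc 1 (q : ℤ) ↔
      edgeLabels G g = {n : ℤ | ∃ k : ℕ, k < q ∧ n = 2 * (k : ℤ) + 1} :=
  edgeLabels_eq_Icc_iff_of_abs_sub_eq fun _ _ ↦ hG.abs_sub_eq_of_adj hf hg hfg

end SimpleGraph.IsBipartiteWith

theorem IsSetOrderedGracefulLabeling.edgeLabels_eq (hf : IsSetOrderedGracefulLabeling G X Y q f) :
    edgeLabels G f = Icc 1 (q : ℤ) :=
  hf.2.2.1

theorem IsSetOrderedOddGracefulLabeling.edgeLabels_eq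
    (hg : IsSetOrderedOddGracefulLabeling G X Y q g) :
    edgeLabels G g = {n : ℤ | ∃ k : ℕ, k < q ∧ n = 2 * (k : ℤ) + 1} :=
  hg.2.2.1

open Classical in
noncomputable def doubledLabeling (Y : Set V) (f : V → ℕ) (v : V) : ℕ :=
  if v ∈ Y then 2 * f v - 2 else 2 * f v - 1

theorem IsSetOrderedGracefulLabeling.two_le_of_mem_right
    (hf : IsSetOrderedGracefulLabeling G X Y q f) (hq : 1 ≤ q) (hG : G.IsBipartiteWith X Y)
    {y : V} (hy : y ∈ Y) : 2 ≤ f y := by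
  obtain ⟨u, v, huv, -⟩ : (1 : ℤ) ∈ edgeLabels G f :=
    hf.edgeLabels_eq ▸ ⟨le_rfl, by exact_mod_cast hq⟩
  obtain ⟨x, hx⟩ : ∃ x, x ∈ X := by
    rcases hG.mem_of_adj huv with ⟨h, -⟩ | ⟨-, h⟩ <;> exact ⟨_, h⟩
  have := (hf.2.1 x).1
  have := hf.2.2.2 x hx y hy
  omega

theorem IsSetOrderedGracefulLabeling.doubled (hf : IsSetOrderedGracefulLabeling G X Y q f)
    (hq : 1 ≤ q) (hG : G.IsBipartiteWith X Y) :
    IsSetOrderedOddGracefulLabeling G X Y q (doubledLabeling Y f) := by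
  have hY : ∀ y ∈ Y, 2 ≤ f y := fun y hy ↦ hf.two_le_of_mem_right hq hG hy
  obtain ⟨hinj, hrange, hlab, hord⟩ := hf
  have hgX : ∀ x ∈ X, doubledLabeling Y f x = 2 * f x - 1 := fun x hx ↦
    if_neg (hG.disjoint.notMem_of_mem_left hx)
  have hgY : ∀ y ∈ Y, doubledLabeling Y f y = 2 * f y - 2 := fun y hy ↦ if_pos hy
  have hord' : ∀ x ∈ X, ∀ y ∈ Y, doubledLabeling Y f x < doubledLabeling Y f y :=
    fun x hx y hy ↦ by
      rw [hgX x hx, hgY y hy]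
      have := (hrange x).1
      have := hord x hx y hy
      omega
  refine ⟨fun a b hab ↦ hinj ?_, fun v ↦ ?_, ?_, hord'⟩
  · have := (hrange a).1
    have := (hrange b).1
    unfold doubledLabeling at hab
    split_ifs at hab with ha hb hb
    · have := hY a ha
      have := hY b hb
      omega
    all_goals omega
  · obtain ⟨h1, h2⟩ := hrange v
    unfold doubledLabeling
    split_ifs with hv
    · have := hY v hv
      exact ⟨by omega, by omega⟩
    · exact ⟨by omega, by omega⟩
  · refine (hG.edgeLabels_eq_Icc_iff hord hord' fun x hx y hy _ ↦ ?_).1 hlab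
    rw [hgX x hx, hgY y hy]
    have := (hrange x).1
    have := hY y hy
    omega

open Classical in
noncomputable def halvedLabeling (Y : Set V) (g : V → ℕ) (v : V) : ℕ :=
  (g v + if v ∈ Y then 2 else 1) / 2

theorem IsSetOrderedOddGracefulLabeling.mod_two_ne_of_adj
    (hg : IsSetOrderedOddGracefulLabeling G X Y q g) {x y : V} (hx : x ∈ X) (hy : y ∈ Y)
    (hxy : G.Adj x y) : g x % 2 ≠ g y % 2 := by
  have hmem : |(g x : ℤ) - g y| ∈ edgeLabels G g := ⟨x, y, hxy, rfl⟩
  rw [hg.edgeLabels_eq, abs_of_neg (by linarith [hg.2.2.2 x hx y hy] : (g x : ℤ) - g y < 0)]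
    at hmem
  obtain ⟨k, -, hk⟩ := hmem
  omega

theorem IsSetOrderedOddGracefulLabeling.mod_two_eq
    (hg : IsSetOrderedOddGracefulLabeling G X Y q g) (hconn : G.Preconnected)
    (hG : G.IsBipartiteWith X Y) {a b : V} (hab : a ∈ Y ↔ b ∈ Y) : g a % 2 = g b % 2 := by
  classical
  have hside := hconn.eq_of_forall_adj (h := fun v ↦ (g v + if v ∈ Y then 1 else 0) % 2)
    (fun u v huv ↦ by
      rcases hG.mem_of_adj huv with ⟨hu, hv⟩ | ⟨hu, hv⟩
      · have := hg.mod_two_ne_of_adj hu hv huv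
        simp only [hG.disjoint.notMem_of_mem_left hu, hv, if_true, if_false]
        omega
      · have := hg.mod_two_ne_of_adj hv hu huv.symm
        simp only [hG.disjoint.notMem_of_mem_left hv, hu, if_true, if_false]
        omega) a b
  by_cases ha : a ∈ Y
  · simp only [ha, hab.mp ha, if_true] at hside
    omega
  · simp only [ha, mt hab.mpr ha, if_false] at hside
    omega

theorem IsSetOrderedOddGracefulLabeling.halved
    (hg : IsSetOrderedOddGracefulLabeling G X Y q g) (hconn : G.Preconnected)
    (hunion : X ∪ Y = univ) (hG : G.IsBipartiteWith X Y) :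
    IsSetOrderedGracefulLabeling G X Y q (halvedLabeling Y g) := by
  have ⟨hinj, hrange, hlab, hgord⟩ := hg
  have hfX : ∀ x ∈ X, halvedLabeling Y g x = (g x + 1) / 2 := fun x hx ↦ by
    simp [halvedLabeling, hG.disjoint.notMem_of_mem_left hx]
  have hfY : ∀ y ∈ Y, halvedLabeling Y g y = (g y + 2) / 2 := fun y hy ↦ by
    simp [halvedLabeling, hy]
  have hord : ∀ x ∈ X, ∀ y ∈ Y, halvedLabeling Y g x < halvedLabeling Y g y :=
    fun x hx y hy ↦ by
      rw [hfX x hx, hfY y hy]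
      have := hgord x hx y hy
      omega
  refine ⟨fun a b hab ↦ hinj ?_, fun v ↦ ?_, ?_, hord⟩
  · have hX : ∀ v, v ∉ Y → v ∈ X := fun v hv ↦ (eq_univ_iff_forall.mp hunion v).resolve_right hv
    by_cases ha : a ∈ Y <;> by_cases hb : b ∈ Y
    · have := hg.mod_two_eq hconn hG (iff_of_true ha hb)
      rw [hfY a ha, hfY b hb] at hab
      omega
    · exact absurd hab (hord b (hX b hb) a ha).ne'
    · exact absurd hab (hord a (hX a ha) b hb).ne
    · have := hg.mod_two_eq hconn hG (iff_of_false ha hb)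
      rw [hfX a (hX a ha), hfX b (hX b hb)] at hab
      omega
  · obtain ⟨h1, h2⟩ := hrange v
    unfold halvedLabeling
    split_ifs
    · exact ⟨by omega, by omega⟩
    · exact ⟨by omega, by omega⟩
  · refine (hG.edgeLabels_eq_Icc_iff hord hgord fun x hx y hy hxy ↦ ?_).2 hlab
    rw [hfX x hx, hfY y hy]
    have := hg.mod_two_ne_of_adj hx hy hxy
    have := hgord x hx y hy
    omega

end

theorem set_ordered_graceful_iff_set_ordered_odd_graceful_general {V : Type*}
    (G : SimpleGraph V) (hconn : G.Connected)
    (q : ℕ) (hq : 1 ≤ q)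
    (X Y : Set V) (hunion : X ∪ Y = Set.univ) (hdisj : Disjoint X Y)
    (hbip : ∀ u v : V, G.Adj u v → (u ∈ X ∧ v ∈ Y) ∨ (u ∈ Y ∧ v ∈ X)) :
    (∃ f : V → ℕ, IsSetOrderedGracefulLabeling G X Y q f) ↔
    (∃ g : V → ℕ, IsSetOrderedOddGracefulLabeling G X Y q g) := by
  have hG : G.IsBipartiteWith X Y := ⟨hdisj, hbip⟩
  exact ⟨fun ⟨_, hf⟩ ↦ ⟨_, hf.doubled hq hG⟩,
    fun ⟨_, hg⟩ ↦ ⟨_, hg.halved hconn.preconnected hunion hG⟩⟩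

/-- A finite connected bipartite graph admits a set-ordered graceful labeling if and only
if it admits a set-ordered odd-graceful labeling. -/
theorem set_ordered_graceful_iff_set_ordered_odd_graceful {V : Type*} [Fintype V]
    (G : SimpleGraph V) (hconn : G.Connected)
    (q : ℕ) (hq : 1 ≤ q) [DecidableRel G.Adj] (hGq : G.edgeFinset.card = q)
    (X Y : Set V) (hunion : X ∪ Y = Set.univ) (hdisj : Disjoint X Y)
    (hbip : ∀ u v : V, G.Adj u v → (u ∈ X ∧ v ∈ Y) ∨ (u ∈ Y ∧ v ∈ X)) :
    (∃ f : V → ℕ, IsSetOrderedGracefulLabeling G X Y q f) ↔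
    (∃ g : V → ℕ, IsSetOrderedOddGracefulLabeling G X Y q g) :=
  set_ordered_graceful_iff_set_ordered_odd_graceful_general G hconn q hq X Y hunion hdisj hbip
end
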